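/- With c_1, c_2 of degrees 1, 2 and c_j^{-1} the degree-j component of the formal inverse of 1 + c_1 + c_2, the quotient ring ℤ[c_1,c_2]/⟨c_3^{-1}, c_4^{-1}⟩ is a free abelian group of rank 6, with one basis element each in degrees 0, 1, 3, 4 and two in degree 2. -/

import Mathlib

/-!
Write `x = c₁` and `y = c₂`. Modulo `c₃⁻¹ = 2xy - x³` and `c₄⁻¹ + x c₃⁻¹ = y² - x²y` we have
`x³ = 2xy` and `y² = x²y`, whence `xy² = x³y = 2xy²`, i.e. `xy² = 0`, and every monomial
of weight at least `5` vanishes. So `1, x, y, x², xy, x²y` span the quotient. Reading off the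
coefficients of these six monomials in the normal form of a polynomial gives six explicit
`ℤ`-linear functionals, each a combination of coefficients of monomials of a single weight; they
vanish on the ideal and are dual to the six monomials. This proves that the six monomials form a
basis, and that the degree-`d` part is spanned by those of weight `d`.
-/

open MvPolynomial

/-- The generator `c_i` of `ℤ[c_1, c_2]` for `i = 1, 2`, together with `c_0 = 1`
and `c_i = 0` for `i > 2`. -/
noncomputable def chern (i : ℕ) : MvPolynomial (Fin 2) ℤ :=
  if h : i = 0 then 1 else if h2 : i ≤ 2 then X ⟨i - 1, by omega⟩ else 0

theorem MvPolynomial.submodule_eq_top_of_mul_X_mem {σ R A : Type*} [CommSemiring R]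
    [CommSemiring A] [Algebra R A] {f : MvPolynomial σ R →ₐ[R] A} (hf : Function.Surjective f)
    {N : Submodule R A} (h1 : 1 ∈ N) (hX : ∀ i, ∀ a ∈ N, a * f (X i) ∈ N) : N = ⊤ := by
  rw [eq_top_iff]
  rintro a -
  obtain ⟨p, rfl⟩ := hf a
  induction p using MvPolynomial.induction_on with
  | C r => simpa [Algebra.algebraMap_eq_smul_one] using N.smul_mem r h1
  | add p q hp hq => simpa using N.add_mem hp hq
  | mul_X p i hp => simpa using hX i _ hp

theorem Submodule.mul_mem_span_range {R A ι : Type*} [CommSemiring R] [Semiring A]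
    [Algebra R A] {v : ι → A} {a q : A} (h : ∀ i, v i * a ∈ span R (Set.range v))
    (hq : q ∈ span R (Set.range v)) : q * a ∈ span R (Set.range v) := by
  induction hq using Submodule.span_induction with
  | mem q hq => obtain ⟨i, rfl⟩ := hq; exact h i
  | zero => simp
  | add q r _ _ hq hr => simpa [add_mul] using add_mem hq hr
  | smul c q _ hq => simpa using Submodule.smul_mem _ c hq

namespace Gr24

noncomputable section

abbrev P : Type := MvPolynomial (Fin 2) ℤ

def invChern3 : P := 2 * X 0 * X 1 - X 0 ^ 3

def invChern4 : P := X 0 ^ 4 - 3 * X 0 ^ 2 * X 1 + X 1 ^ 2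

theorem inv_three_four_eq {inv : ℕ → P} (hinv0 : inv 0 = 1)
    (hinv : ∀ j : ℕ, 0 < j → ∑ i ∈ Finset.range (j + 1), chern i * inv (j - i) = 0) :
    inv 3 = invChern3 ∧ inv 4 = invChern4 := by
  have h1 := hinv 1 one_pos
  have h2 := hinv 2 two_pos
  have h3 := hinv 3 three_pos
  have h4 := hinv 4 four_pos
  simp [Finset.sum_range_succ, chern, hinv0] at h1 h2 h3 h4
  have e1 : inv 1 = -X 0 := by linear_combination h1
  have e2 : inv 2 = X 0 ^ 2 - X 1 := by linear_combination h2 - X 0 * e1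
  have e3 : inv 3 = 2 * X 0 * X 1 - X 0 ^ 3 := by linear_combination h3 - X 0 * e2 - X 1 * e1
  exact ⟨e3, by rw [invChern4]; linear_combination h4 - X 0 * e3 - X 1 * e2⟩

def mono (a b : ℕ) : Fin 2 →₀ ℕ := Finsupp.single 0 a + Finsupp.single 1 b

theorem mono_le_mono {a b a' b' : ℕ} : mono a' b' ≤ mono a b ↔ a' ≤ a ∧ b' ≤ b := by
  simp [mono, Finsupp.le_def, Fin.forall_fin_two]

theorem mono_sub_mono (a b a' b' : ℕ) : mono a b - mono a' b' = mono (a - a') (b - b') := by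
  ext i; fin_cases i <;> simp [mono]

theorem mono_inj {a b a' b' : ℕ} : mono a b = mono a' b' ↔ a = a' ∧ b = b' := by
  simp [mono, Finsupp.ext_iff, Fin.forall_fin_two]

theorem weight_mono (a b : ℕ) : Finsupp.weight ![1, 2] (mono a b) = a + 2 * b := by
  simp [mono, Finsupp.weight_eq_sum, mul_comm]

theorem monomial_mono (a b : ℕ) (r : ℤ) :
    (monomial (mono a b) r : P) = C r * X 0 ^ a * X 1 ^ b := by
  rw [mul_assoc, X_pow_eq_monomial, X_pow_eq_monomial, monomial_mul, C_mul_monomial, one_mul,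
    mul_one, mono]

theorem invChern3_eq : invChern3 = monomial (mono 1 1) 2 - monomial (mono 3 0) 1 := by
  simp only [monomial_mono, invChern3, C_1, map_ofNat]
  ring

theorem invChern4_eq :
    invChern4 = monomial (mono 4 0) 1 - monomial (mono 2 1) 3 + monomial (mono 0 2) 1 := by
  simp only [monomial_mono, invChern4, C_1, map_ofNat]
  ring

def basisExp : Fin 6 → ℕ × ℕ := ![(0, 0), (1, 0), (0, 1), (2, 0), (1, 1), (2, 1)]

def basisMonomial (i : Fin 6) : P := monomial (mono (basisExp i).1 (basisExp i).2) 1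

def basisDeg (i : Fin 6) : ℕ := (basisExp i).1 + 2 * (basisExp i).2

theorem isWeightedHomogeneous_basisMonomial (i : Fin 6) :
    (basisMonomial i).IsWeightedHomogeneous ![1, 2] (basisDeg i) :=
  isWeightedHomogeneous_monomial _ _ _ (weight_mono _ _)

/-- `normalCoeff i p` is the coefficient of `basisMonomial i` in the normal form of `p`, obtained
by the rewriting `x³ ↦ 2xy`, `y² ↦ x²y`, `x⁴ ↦ 2x²y` and sending all monomials of weight `≥ 5`
to `0`. -/
def normalCoeff : Fin 6 → P →ₗ[ℤ] ℤ
  | 0 => lcoeff ℤ (mono 0 0)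
  | 1 => lcoeff ℤ (mono 1 0)
  | 2 => lcoeff ℤ (mono 0 1)
  | 3 => lcoeff ℤ (mono 2 0)
  | 4 => lcoeff ℤ (mono 1 1) + 2 • lcoeff ℤ (mono 3 0)
  | 5 => lcoeff ℤ (mono 2 1) + lcoeff ℤ (mono 0 2) + 2 • lcoeff ℤ (mono 4 0)

theorem normalCoeff_basisMonomial (i j : Fin 6) :
    normalCoeff i (basisMonomial j) = (Pi.single j 1 : Fin 6 → ℤ) i := by
  fin_cases i <;> fin_cases j <;> simp [normalCoeff, basisMonomial, basisExp, coeff_monomial,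
    mono_inj]

theorem normalCoeff_sum_smul_basisMonomial (c : Fin 6 → ℤ) (j : Fin 6) :
    normalCoeff j (∑ i, c i • basisMonomial i) = c j := by
  simp only [map_sum, map_zsmul, normalCoeff_basisMonomial]
  simp [Pi.single_apply]

theorem normalCoeff_eq_zero_of_isWeightedHomogeneous {p : P} {d : ℕ}
    (hp : p.IsWeightedHomogeneous ![1, 2] d) {i : Fin 6} (hi : basisDeg i ≠ d) :
    normalCoeff i p = 0 := by
  have hc (a b : ℕ) (hab : a + 2 * b ≠ d) : coeff (mono a b) p = 0 :=
    hp.coeff_eq_zero _ (by rwa [weight_mono])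
  fin_cases i <;> simp [basisDeg, basisExp] at hi <;> simp [normalCoeff, hc, hi]

theorem normalCoeff_mul_invChern3 (i : Fin 6) (p : P) : normalCoeff i (p * invChern3) = 0 := by
  fin_cases i <;> simp [normalCoeff, invChern3_eq, mul_sub, coeff_mul_monomial', mono_le_mono,
    mono_sub_mono] <;> ring

theorem normalCoeff_mul_invChern4 (i : Fin 6) (p : P) : normalCoeff i (p * invChern4) = 0 := by
  fin_cases i <;> simp [normalCoeff, invChern4_eq, mul_sub, mul_add, coeff_mul_monomial',
    mono_le_mono]
  ring

abbrev J : Ideal P := Ideal.span {invChern3, invChern4}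

local notation "π" => Ideal.Quotient.mk J

theorem normalCoeff_eq_zero_of_mem {q : P} (hq : q ∈ J) (i : Fin 6) : normalCoeff i q = 0 := by
  obtain ⟨a, b, rfl⟩ := Ideal.mem_span_pair.1 hq
  rw [map_add, normalCoeff_mul_invChern3, normalCoeff_mul_invChern4, add_zero]

theorem mk_X_zero_pow_three : π (X 0) ^ 3 = 2 * π (X 0) * π (X 1) := by
  have h : π invChern3 = 0 := Ideal.Quotient.eq_zero_iff_mem.2 (Ideal.subset_span (by simp))
  simp only [invChern3, map_sub, map_mul, map_pow, map_ofNat] at h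
  linear_combination -h

theorem mk_X_one_sq : π (X 1) ^ 2 = π (X 0) ^ 2 * π (X 1) := by
  have h : π invChern4 = 0 := Ideal.Quotient.eq_zero_iff_mem.2 (Ideal.subset_span (by simp))
  simp only [invChern4, map_sub, map_add, map_mul, map_pow, map_ofNat] at h
  linear_combination h - π (X 0) * mk_X_zero_pow_three

theorem mk_X_zero_mul_X_one_sq : π (X 0) * π (X 1) ^ 2 = 0 := by
  linear_combination -(π (X 0) * mk_X_one_sq) - π (X 1) * mk_X_zero_pow_three

theorem span_range_mk_basisMonomial : Submodule.span ℤ (Set.range (π ∘ basisMonomial)) = ⊤ := by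
  have h3 := mk_X_zero_pow_three
  have h4 := mk_X_one_sq
  have h5 := mk_X_zero_mul_X_one_sq
  have hx : Ideal.Quotient.mkₐ ℤ J (X 0) = π (X 0) := rfl
  have hy : Ideal.Quotient.mkₐ ℤ J (X 1) = π (X 1) := rfl
  set x := π (X 0)
  set y := π (X 1)
  have hv (i : Fin 6) : π (basisMonomial i) = x ^ (basisExp i).1 * y ^ (basisExp i).2 := by
    simp [basisMonomial, monomial_mono, x, y]
  set N := Submodule.span ℤ (Set.range (π ∘ basisMonomial))
  have mem (l : Fin 6) (n : ℤ) {z : P ⧸ J}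
      (hz : z = n • (x ^ (basisExp l).1 * y ^ (basisExp l).2)) : z ∈ N := by
    rw [hz, ← hv]; exact N.smul_mem n (Submodule.subset_span ⟨l, rfl⟩)
  refine MvPolynomial.submodule_eq_top_of_mul_X_mem (Ideal.Quotient.mkₐ_surjective ℤ J)
    (mem 0 1 (by simp [basisExp])) fun j a ha => Submodule.mul_mem_span_range (fun k => ?_) ha
  fin_cases j <;> fin_cases k
  · exact mem 1 1 (by simp [hv, hx, basisExp])
  · exact mem 3 1 (by simp [hv, hx, basisExp]; ring)
  · exact mem 4 1 (by simp [hv, hx, basisExp]; ring)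
  · exact mem 4 2 (by simp [hv, hx, basisExp]; linear_combination h3)
  · exact mem 5 1 (by simp [hv, hx, basisExp]; ring)
  · exact mem 0 0 (by simp [hv, hx, basisExp]; linear_combination y * h3 + 2 * h5)
  · exact mem 2 1 (by simp [hv, hy, basisExp])
  · exact mem 4 1 (by simp [hv, hy, basisExp])
  · exact mem 5 1 (by simp [hv, hy, basisExp]; linear_combination h4)
  · exact mem 5 1 (by simp [hv, hy, basisExp])
  · exact mem 0 0 (by simp [hv, hy, basisExp]; linear_combination h5)
  · exact mem 0 0 (by simp [hv, hy, basisExp]; linear_combination x * h5)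

theorem linearIndependent_mk_basisMonomial : LinearIndependent ℤ (π ∘ basisMonomial) := by
  rw [Fintype.linearIndependent_iff]
  intro c hc j
  have hmem : ∑ i, c i • basisMonomial i ∈ J := by
    rw [← Ideal.Quotient.eq_zero_iff_mem, map_sum]
    simpa [map_zsmul] using hc
  rw [← normalCoeff_sum_smul_basisMonomial c j, normalCoeff_eq_zero_of_mem hmem]

def quotientBasis : Module.Basis (Fin 6) ℤ (P ⧸ J) :=
  .mk linearIndependent_mk_basisMonomial span_range_mk_basisMonomial.ge

theorem quotientBasis_apply (i : Fin 6) : quotientBasis i = π (basisMonomial i) :=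
  Module.Basis.mk_apply _ _ _

theorem quotientBasis_repr_mk (p : P) (i : Fin 6) :
    quotientBasis.repr (π p) i = normalCoeff i p := by
  set c := quotientBasis.repr (π p)
  have hmem : p - ∑ k, c k • basisMonomial k ∈ J := by
    rw [← Ideal.Quotient.eq_zero_iff_mem, map_sub, map_sum, sub_eq_zero]
    conv_lhs => rw [← quotientBasis.sum_repr (π p)]
    simp [quotientBasis_apply, c]
  have := normalCoeff_eq_zero_of_mem hmem i
  rwa [map_sub, normalCoeff_sum_smul_basisMonomial, sub_eq_zero, eq_comm] at this

theorem span_mk_isWeightedHomogeneous (d : ℕ) :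
    Submodule.span ℤ (π '' {p | p.IsWeightedHomogeneous ![1, 2] d}) =
      Submodule.span ℤ (quotientBasis '' {i | basisDeg i = d}) := by
  apply le_antisymm
  · rw [Submodule.span_le]
    rintro _ ⟨p, hp, rfl⟩
    rw [← quotientBasis.sum_repr (π p)]
    refine Submodule.sum_mem _ fun i _ => ?_
    by_cases hi : basisDeg i = d
    · exact Submodule.smul_mem _ _ (Submodule.subset_span ⟨i, hi, rfl⟩)
    · simp [quotientBasis_repr_mk, normalCoeff_eq_zero_of_isWeightedHomogeneous hp hi]
  · refine Submodule.span_mono ?_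
    rintro _ ⟨i, rfl, rfl⟩
    exact ⟨basisMonomial i, isWeightedHomogeneous_basisMonomial i, (quotientBasis_apply i).symm⟩

theorem finrank_span_mk_isWeightedHomogeneous (d : ℕ) :
    Module.finrank ℤ (Submodule.span ℤ (π '' {p | p.IsWeightedHomogeneous ![1, 2] d})) =
      Fintype.card {i | basisDeg i = d} := by
  rw [span_mk_isWeightedHomogeneous, Set.image_eq_range]
  exact finrank_span_eq_card (quotientBasis.linearIndependent.comp _ Subtype.val_injective)

end

end Gr24

/-- with `c_1, c_2` of degrees `1, 2` and `c_j⁻¹ = inv j` the degree-`j`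
component of the formal inverse of `1 + c_1 + c_2` (characterized by `inv 0 = 1` and
`∑_{i ≤ j} c_i · inv (j-i) = 0` for `j ≥ 1`), the quotient ring
`ℤ[c_1, c_2]/⟨c_3⁻¹, c_4⁻¹⟩` is a free abelian group of rank `6`, with one basis
element each in (weighted) degrees `0, 1, 3, 4` and two in degree `2`. -/
theorem stmt15 (inv : ℕ → MvPolynomial (Fin 2) ℤ) (hinv0 : inv 0 = 1)
    (hinv : ∀ j : ℕ, 0 < j →
      ∑ i ∈ Finset.range (j + 1), chern i * inv (j - i) = 0)
    (I : Ideal (MvPolynomial (Fin 2) ℤ))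
    (hI : I = Ideal.span {inv 3, inv 4})
    (Qd : ℕ → Submodule ℤ (MvPolynomial (Fin 2) ℤ ⧸ I))
    (hQd : ∀ d, Qd d = Submodule.span ℤ
      (Ideal.Quotient.mk I '' {p | p.IsWeightedHomogeneous ![1, 2] d})) :
    Module.Free ℤ (MvPolynomial (Fin 2) ℤ ⧸ I) ∧
    Module.Finite ℤ (MvPolynomial (Fin 2) ℤ ⧸ I) ∧
    Module.finrank ℤ (MvPolynomial (Fin 2) ℤ ⧸ I) = 6 ∧
    Module.finrank ℤ (Qd 0) = 1 ∧ Module.finrank ℤ (Qd 1) = 1 ∧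
    Module.finrank ℤ (Qd 2) = 2 ∧ Module.finrank ℤ (Qd 3) = 1 ∧
    Module.finrank ℤ (Qd 4) = 1 := by
  obtain ⟨h3, h4⟩ := Gr24.inv_three_four_eq hinv0 hinv
  obtain rfl : I = Gr24.J := by rw [hI, h3, h4]
  have finrank_Qd (d : ℕ) : Module.finrank ℤ (Qd d) = Fintype.card {i | Gr24.basisDeg i = d} := by
    rw [hQd, Gr24.finrank_span_mk_isWeightedHomogeneous]
  refine ⟨.of_basis Gr24.quotientBasis, .of_basis Gr24.quotientBasis, ?_, ?_, ?_, ?_, ?_, ?_⟩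
  · rw [Module.finrank_eq_card_basis Gr24.quotientBasis, Fintype.card_fin]
  all_goals rw [finrank_Qd]; rfl
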